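/- arXiv:2501.08298 — 6 statements merged into one kernel-verified Lean document; each statement's English description precedes it below -/
import Mathlib

section
/- Let X be a set carrying two topologies t₀ and t₁ such that (X,t₀) is hereditarily Lindelöf and (X,t₁) is second countable (has a countable basis). Then the join topology t₀ ⊔ t₁ (the topology generated by t₀ ∪ t₁) on X is hereditarily Lindelöf. -/
open Topology

lemma join_open_basis {X : Type*} {t₀ t₁ : TopologicalSpace X} {s : Set X}
    (hs : TopologicalSpace.GenerateOpen {s : Set X | IsOpen[t₀] s ∨ IsOpen[t₁] s} s) :
    ∀ x ∈ s, ∃ u v, IsOpen[t₀] u ∧ IsOpen[t₁] v ∧ x ∈ u ∧ x ∈ v ∧ u ∩ v ⊆ s := by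
  induction hs with
  | basic s h =>
    intro x hx
    rcases h with h | h
    · exact ⟨s, Set.univ, h, @isOpen_univ X t₁, hx, trivial, fun y hy => hy.1⟩
    · exact ⟨Set.univ, s, @isOpen_univ X t₀, h, trivial, hx, fun y hy => hy.2⟩
  | univ =>
    intro x _
    exact ⟨Set.univ, Set.univ, @isOpen_univ X t₀, @isOpen_univ X t₁, trivial, trivial, fun _ _ => trivial⟩
  | inter s t _ _ ihs iht =>
    intro x hx
    obtain ⟨u, v, hu, hv, hxu, hxv, huv⟩ := ihs x hx.1
    obtain ⟨u', v', hu', hv', hxu', hxv', huv'⟩ := iht x hx.2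
    exact ⟨u ∩ u', v ∩ v', @IsOpen.inter X t₀ u u' hu hu', @IsOpen.inter X t₁ v v' hv hv',
      ⟨hxu, hxu'⟩, ⟨hxv, hxv'⟩,
      fun y hy => ⟨huv ⟨hy.1.1, hy.2.1⟩, huv' ⟨hy.1.2, hy.2.2⟩⟩⟩
  | sUnion S _ ih =>
    intro x hx
    obtain ⟨s, hsS, hxs⟩ := hx
    obtain ⟨u, v, hu, hv, hxu, hxv, huv⟩ := ih s hsS x hxs
    exact ⟨u, v, hu, hv, hxu, hxv, fun y hy => ⟨s, hsS, huv hy⟩⟩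

/-- If `(X, t₀)` is hereditarily Lindelöf and `(X, t₁)` is second countable, then the
join topology (the topology generated by the union of `t₀` and `t₁`) is hereditarily
Lindelöf. -/
theorem stmt0 {X : Type*} (t₀ t₁ : TopologicalSpace X)
    (h₀ : @HereditarilyLindelofSpace X t₀)
    (h₁ : @SecondCountableTopology X t₁) :
    @HereditarilyLindelofSpace X
      (TopologicalSpace.generateFrom {s : Set X | IsOpen[t₀] s ∨ IsOpen[t₁] s}) := by
  set tj := TopologicalSpace.generateFrom {s : Set X | IsOpen[t₀] s ∨ IsOpen[t₁] s} with htj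
  classical
  constructor
  intro T _
  apply isLindelof_of_countable_subcover (X := X)
  intro ι U hU hTU
  -- countable basis of t₁
  obtain ⟨B, hBc, -, hB⟩ := @TopologicalSpace.exists_countable_basis X t₁ h₁
  -- for each i and x ∈ U i, choose a t₀-open u and basis element b with x ∈ u ∩ b ⊆ U i
  have key : ∀ (i : ι) (x : X), x ∈ U i →
      ∃ u b, IsOpen[t₀] u ∧ b ∈ B ∧ x ∈ u ∧ x ∈ b ∧ u ∩ b ⊆ U i := by
    intro i x hx
    obtain ⟨u, v, hu, hv, hxu, hxv, huv⟩ := join_open_basis (hU i) x hx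
    obtain ⟨b, hbB, hxb, hbv⟩ := @TopologicalSpace.IsTopologicalBasis.exists_subset_of_mem_open X t₁ B hB x v hxv hv
    exact ⟨u, b, hu, hbB, hxu, hxb, fun y hy => huv ⟨hy.1, hbv hy.2⟩⟩
  choose u b hu hbB hxu hxb hsub using key
  -- for each basis element b0, apply hereditary Lindelöfness of t₀
  have step : ∀ b0 : Set X, ∃ c : Set (Σ' (i : ι) (x : X), x ∈ U i),
      c.Countable ∧
      (T ∩ ⋃ (p : Σ' (i : ι) (x : X), x ∈ U i) (_ : b p.1 p.2.1 p.2.2 = b0),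
        u p.1 p.2.1 p.2.2)
      ⊆ ⋃ p ∈ c, (fun p : Σ' (i : ι) (x : X), x ∈ U i =>
        if b p.1 p.2.1 p.2.2 = b0 then u p.1 p.2.1 p.2.2 else ∅) p := by
    intro b0
    set V : (Σ' (i : ι) (x : X), x ∈ U i) → Set X :=
      fun p => if b p.1 p.2.1 p.2.2 = b0 then u p.1 p.2.1 p.2.2 else ∅ with hV
    have hVopen : ∀ p, IsOpen[t₀] (V p) := by
      intro p
      simp only [hV]
      split
      · exact hu _ _ _
      · exact @isOpen_empty X t₀
    set W : Set X := T ∩ ⋃ (p : Σ' (i : ι) (x : X), x ∈ U i)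
      (_ : b p.1 p.2.1 p.2.2 = b0), u p.1 p.2.1 p.2.2 with hW
    have hLin : @IsLindelof X t₀ W :=
      h₀.isHereditarilyLindelof_univ _ (Set.subset_univ _)
    have hcov : W ⊆ ⋃ p, V p := by
      rintro x ⟨-, hx⟩
      simp only [Set.mem_iUnion] at hx ⊢
      obtain ⟨p, hp, hxp⟩ := hx
      exact ⟨p, by simp [hV, hp, hxp]⟩
    exact @IsLindelof.elim_countable_subcover X t₀ W _ hLin V hVopen hcov
  choose c hc_count hc_cov using step
  -- the final countable index set
  refine ⟨⋃ b0 ∈ B, (fun p : Σ' (i : ι) (x : X), x ∈ U i => p.1) '' c b0,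
    hBc.biUnion (fun b0 _ => ((hc_count b0).image _)), ?_⟩
  intro x hxT
  obtain ⟨i, hxi⟩ := Set.mem_iUnion.1 (hTU hxT)
  set b0 := b i x hxi with hb0
  have hx_mem : x ∈ T ∩ ⋃ (p : Σ' (i : ι) (x : X), x ∈ U i)
      (_ : b p.1 p.2.1 p.2.2 = b0), u p.1 p.2.1 p.2.2 := by
    refine ⟨hxT, ?_⟩
    simp only [Set.mem_iUnion]
    exact ⟨⟨i, x, hxi⟩, rfl, hxu i x hxi⟩
  have := hc_cov b0 hx_mem
  simp only [Set.mem_iUnion] at this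
  obtain ⟨p, hpc, hxp⟩ := this
  have hbp : b p.1 p.2.1 p.2.2 = b0 := by
    by_contra h
    simp [h] at hxp
  rw [if_pos hbp] at hxp
  have hxU : x ∈ U p.1 := hsub p.1 p.2.1 p.2.2 ⟨hxp, hbp ▸ hxb i x hxi⟩
  refine Set.mem_iUnion₂.2 ⟨p.1, ?_, hxU⟩
  exact Set.mem_biUnion (hbB i x hxi) ⟨p, hpc, rfl⟩
end

section
/- Let X be a set carrying two topologies t₀ and t₁ such that (X,t₀) is hereditarily Lindelöf and not separable, (X,t₁) is second countable, and every subset of X is a Gδ set in (X,t₁). Then the join topology t = t₀ ⊔ t₁ satisfies: (X,t) is hereditarily Lindelöf, (X,t) is not separable, and every subset of X is a Gδ set in (X,t). -/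
/-!
A set open for `t₀ ⊓ t₁` (the join: Mathlib orders topologies by fineness) is the union,
over the members `b` of a countable basis of `t₁`, of the sets `V ∩ b` with `V` the `t₀`-interior of `bᶜ ∪ U`.
Hereditary Lindelöfness of `t₀` reduces a family of such sets to a countable subfamily one
basic set `b` at a time, and countably many `b` keep the total countable. Non-separability
passes to the finer topology `t₀ ⊓ t₁` and the `Gδ` property passes from `t₁` to it.
-/

open Set Topology TopologicalSpace

universe u

theorem HereditarilyLindelofSpace.of_exists_countable_iUnion_eq {X : Type u}
    [TopologicalSpace X]
    (H : ∀ (ι : Type u) (U : ι → Set X), (∀ i, IsOpen (U i)) →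
      ∃ t : Set ι, t.Countable ∧ ⋃ i ∈ t, U i = ⋃ i, U i) :
    HereditarilyLindelofSpace X :=
  ⟨fun _ _ ↦ isLindelof_of_countable_subcover fun U hU hs ↦
    let ⟨t, htc, ht⟩ := H _ U hU
    ⟨t, htc, ht ▸ hs⟩⟩

theorem TopologicalSpace.IsTopologicalBasis.iUnion_interior_union_inter_eq {X : Type*}
    {t₀ t₁ : TopologicalSpace X} {B : Set (Set X)} (hB : @IsTopologicalBasis X t₁ B)
    {U : Set X} (hU : IsOpen[t₀ ⊓ t₁] U) :
    ⋃ b ∈ B, @interior X t₀ (bᶜ ∪ U) ∩ b = U := by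
  refine Subset.antisymm (iUnion₂_subset fun b _ x ⟨hxV, hxb⟩ ↦ ?_) fun x hx ↦ ?_
  · exact (@interior_subset X t₀ _ _ hxV).resolve_left (not_not_intro hxb)
  · have hUx : U ∈ @nhds X (t₀ ⊓ t₁) x := @IsOpen.mem_nhds X (t₀ ⊓ t₁) x U hU hx
    rw [@nhds_inf X t₀ t₁ x] at hUx
    obtain ⟨u, hu, v, hv, rfl⟩ := Filter.mem_inf_iff.mp hUx
    obtain ⟨b, hbB, hxb, hbv⟩ := hB.mem_nhds_iff.mp hv
    refine mem_biUnion hbB ⟨?_, hxb⟩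
    refine (@mem_interior_iff_mem_nhds X t₀ x _).mpr (Filter.mem_of_superset hu fun y hy ↦ ?_)
    by_cases hyb : y ∈ b
    exacts [Or.inr ⟨hy, hbv hyb⟩, Or.inl hyb]

theorem HereditarilyLindelofSpace.inf_of_secondCountableTopology {X : Type u}
    {t₀ t₁ : TopologicalSpace X} (h₀ : @HereditarilyLindelofSpace X t₀)
    (h₁ : @SecondCountableTopology X t₁) :
    @HereditarilyLindelofSpace X (t₀ ⊓ t₁) := by
  obtain ⟨B, hBc, -, hB⟩ := @exists_countable_basis X t₁ h₁
  refine @of_exists_countable_iUnion_eq X (t₀ ⊓ t₁) fun ι U hU ↦ ?_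
  set V : Set X → ι → Set X := fun b i ↦ @interior X t₀ (bᶜ ∪ U i)
  have hV : ∀ b, ∃ c : Set ι, c.Countable ∧ ⋃ i ∈ c, V b i = ⋃ i, V b i := fun b ↦
    @eq_open_union_countable X t₀ h₀ ι (V b) fun i ↦ @isOpen_interior X t₀ _
  choose c hcc hcV using hV
  refine ⟨⋃ b ∈ B, c b, hBc.biUnion fun b _ ↦ hcc b, Subset.antisymm
    (iUnion₂_subset fun i _ ↦ subset_iUnion U i) (iUnion_subset fun i x hx ↦ ?_)⟩
  rw [← hB.iUnion_interior_union_inter_eq (hU i)] at hx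
  obtain ⟨b, hbB, hxV, hxb⟩ := mem_iUnion₂.mp hx
  obtain ⟨j, hjc, hxVj⟩ := mem_iUnion₂.mp ((hcV b).ge (mem_iUnion_of_mem i hxV))
  refine mem_biUnion (mem_biUnion hbB hjc) ?_
  rw [← hB.iUnion_interior_union_inter_eq (hU j)]
  exact mem_biUnion hbB ⟨hxVj, hxb⟩

/-- Suppose `(X, t₀)` is hereditarily Lindelöf and not separable, `(X, t₁)` is second
countable, and every subset of `X` is a `Gδ` set with respect to `t₁`.  Then the join
topology `t = t₀ ⊔ t₁` (generated by the union of `t₀` and `t₁`) is hereditarily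
Lindelöf, not separable, and every subset of `X` is a `Gδ` set with respect to `t`. -/
theorem stmt2 {X : Type*} (t₀ t₁ : TopologicalSpace X)
    (h₀L : @HereditarilyLindelofSpace X t₀)
    (h₀S : ¬ @SeparableSpace X t₀)
    (h₁C : @SecondCountableTopology X t₁)
    (h₁G : ∀ A : Set X, @IsGδ X t₁ A) :
    @HereditarilyLindelofSpace X
        (TopologicalSpace.generateFrom {s : Set X | IsOpen[t₀] s ∨ IsOpen[t₁] s}) ∧
    ¬ @SeparableSpace X
        (TopologicalSpace.generateFrom {s : Set X | IsOpen[t₀] s ∨ IsOpen[t₁] s}) ∧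
    ∀ A : Set X, @IsGδ X
        (TopologicalSpace.generateFrom {s : Set X | IsOpen[t₀] s ∨ IsOpen[t₁] s}) A := by
  have hjoin : generateFrom {s : Set X | IsOpen[t₀] s ∨ IsOpen[t₁] s} = t₀ ⊓ t₁ :=
    generateFrom_union_isOpen t₀ t₁
  rw [hjoin]
  refine ⟨h₀L.inf_of_secondCountableTopology h₁C, fun hsep ↦ h₀S ?_, fun A ↦ ?_⟩
  · exact @DenseRange.separableSpace X X (t₀ ⊓ t₁) hsep t₀ id (@denseRange_id X t₀)
      (continuous_id_of_le inf_le_left)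
  · exact @IsGδ.preimage X X (t₀ ⊓ t₁) t₁ id A (continuous_id_of_le inf_le_right) (h₁G A)
end

section
/- Fix a C-sequence. Let α ≤ γ ≤ β < ω₁ and suppose that L(α,γ) ≠ ∅ and that every element of L(γ,β) is strictly smaller than min L(α,γ). Then L(α,β) = L(α,γ) ∪ L(γ,β). -/
noncomputable section

open Set Ordinal

/-- The first uncountable ordinal. -/
def omega1 : Ordinal := (Cardinal.aleph 1).ord

/-- `C` is a C-sequence: `C 0 = ∅`, `C (α+1) = {α}`, and for every limit `α < ω₁`,
`C α` is a cofinal subset of `α` meeting every initial segment in a finite set. -/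
def IsCSeq (C : Ordinal → Set Ordinal) : Prop :=
  C 0 = ∅ ∧ (∀ α, C (α + 1) = {α}) ∧
  ∀ α, α < omega1 → Order.IsSuccLimit α →
    (∀ ξ ∈ C α, ξ < α) ∧ (∀ ξ < α, ∃ η ∈ C α, ξ ≤ η) ∧ ∀ ξ < α, (C α ∩ Iio ξ).Finite

/-- `min (C β \ α)`. -/
def minAbove (C : Ordinal → Set Ordinal) (α β : Ordinal) : Ordinal :=
  sInf {ξ ∈ C β | α ≤ ξ}

/-- `max (C β ∩ α)`. -/
def maxBelow (C : Ordinal → Set Ordinal) (α β : Ordinal) : Ordinal :=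
  sSup (C β ∩ Iio α)

/-- `U` is the upper trace function of the C-sequence `C`:
`U(α,α) = ∅` and `U(α,β) = U(α, min (C β \ α)) ∪ {β}` for `α < β`. -/
def UpperSpec (C : Ordinal → Set Ordinal) (U : Ordinal → Ordinal → Set Ordinal) : Prop :=
  (∀ α, U α α = ∅) ∧ ∀ α β, α < β → U α β = U α (minAbove C α β) ∪ {β}

/-- `L` is the lower trace function of the C-sequence `C`: `L(α,α) = ∅`,
`L(α,β) = L(α, min (C β \ α))` when `C β ∩ α = ∅`, and otherwise
`L(α,β) = {ζ ∈ L(α, min (C β \ α)) ∪ {max (C β ∩ α)} : ζ ≥ max (C β ∩ α)}`. -/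
def LowerSpec (C : Ordinal → Set Ordinal) (L : Ordinal → Ordinal → Set Ordinal) : Prop :=
  (∀ α, L α α = ∅) ∧
  (∀ α β, α < β → C β ∩ Iio α = ∅ → L α β = L α (minAbove C α β)) ∧
  ∀ α β, α < β → (C β ∩ Iio α).Nonempty →
    L α β = {ζ ∈ L α (minAbove C α β) ∪ {maxBelow C α β} | maxBelow C α β ≤ ζ}

/-
Induct on `β ≥ γ` along the recursion `β ↦ min (C β ∖ γ)`. Write `θ = min L(α,γ) < α`.
If `C β ∩ γ` is nonempty, its maximum lies in `L(γ,β)`, hence below `θ < α`, so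
`C β ∩ α = C β ∩ γ`: the recursions computing `L(α,β)` and `L(γ,β)` take the same step,
and the cut at `max (C β ∩ γ) < θ` leaves `L(α,γ)` untouched.
-/

namespace IsCSeq

variable {C : Ordinal → Set Ordinal} (hC : IsCSeq C) {δ β : Ordinal}
include hC

lemma minAbove_mem_Ico (h : δ < β) (hβ : β < omega1) :
    minAbove C δ β ∈ C β ∧ minAbove C δ β ∈ Ico δ β := by
  rcases Ordinal.zero_or_succ_or_isSuccLimit β with rfl | ⟨b, rfl⟩ | hlim
  · exact absurd h (not_lt_zero (a := δ))
  · have hδb : δ ≤ b := Order.lt_succ_iff.mp h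
    have hCb : C (Order.succ b) = {b} := Order.succ_eq_add_one b ▸ hC.2.1 b
    have hmin : minAbove C δ (Order.succ b) = b := by
      rw [minAbove, hCb, sep_eq_self_iff_mem_true.mpr (by simpa using hδb), csInf_singleton]
    rw [hmin, hCb]
    exact ⟨rfl, hδb, Order.lt_succ b⟩
  · obtain ⟨hlt, hcof, -⟩ := hC.2.2 β hβ hlim
    obtain ⟨η, hη, hδη⟩ := hcof δ h
    obtain ⟨hmem, hle⟩ := csInf_mem (s := {ξ ∈ C β | δ ≤ ξ}) ⟨η, hη, hδη⟩
    exact ⟨hmem, hle, hlt _ hmem⟩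

lemma finite_inter_Iio (h : δ < β) (hβ : β < omega1) : (C β ∩ Iio δ).Finite := by
  rcases Ordinal.zero_or_succ_or_isSuccLimit β with rfl | ⟨b, rfl⟩ | hlim
  · exact absurd h (not_lt_zero (a := δ))
  · rw [Order.succ_eq_add_one, hC.2.1 b]
    exact (finite_singleton b).inter_of_left _
  · exact (hC.2.2 β hβ hlim).2.2 δ h

lemma maxBelow_mem (h : δ < β) (hβ : β < omega1) (hne : (C β ∩ Iio δ).Nonempty) :
    maxBelow C δ β ∈ C β ∩ Iio δ :=
  hne.csSup_mem (hC.finite_inter_Iio h hβ)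

end IsCSeq

lemma minAbove_eq_of_inter_Iio_eq {C : Ordinal → Set Ordinal} {α γ β : Ordinal} (hαγ : α ≤ γ)
    (h : C β ∩ Iio α = C β ∩ Iio γ) : minAbove C α β = minAbove C γ β := by
  unfold minAbove
  congr 1
  ext ξ
  refine ⟨fun ⟨hξ, hαξ⟩ => ⟨hξ, not_lt.mp fun hξγ => ?_⟩, fun ⟨hξ, hγξ⟩ => ⟨hξ, hαγ.trans hγξ⟩⟩
  exact not_lt.mpr hαξ (h ▸ ⟨hξ, hξγ⟩ : ξ ∈ C β ∩ Iio α).2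

namespace LowerSpec

variable {C : Ordinal → Set Ordinal} (hC : IsCSeq C) {L : Ordinal → Ordinal → Set Ordinal}
  (hL : LowerSpec C L)
include hC hL

lemma lt_of_mem {α δ ζ : Ordinal} (hαδ : α ≤ δ) (hδ : δ < omega1) (hζ : ζ ∈ L α δ) : ζ < α := by
  induction δ using WellFoundedLT.induction with
  | ind δ IH =>
    rcases hαδ.eq_or_lt with rfl | h
    · simp [hL.1] at hζ
    obtain ⟨-, hle, hlt⟩ := hC.minAbove_mem_Ico h hδ
    rcases (C δ ∩ Iio α).eq_empty_or_nonempty with hc | hc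
    · rw [hL.2.1 α δ h hc] at hζ
      exact IH _ hlt hle (hlt.trans hδ) hζ
    · rw [hL.2.2 α δ h hc] at hζ
      obtain ⟨hζ | rfl, -⟩ := hζ
      · exact IH _ hlt hle (hlt.trans hδ) hζ
      · exact (hC.maxBelow_mem h hδ hc).2

lemma eq_union_of_lt {α γ β θ : Ordinal} (hαγ : α ≤ γ) (hθα : θ ≤ α)
    (hθ : ∀ ζ ∈ L α γ, θ ≤ ζ) (hγβ : γ ≤ β) (hβ : β < omega1)
    (hlt : ∀ ζ ∈ L γ β, ζ < θ) : L α β = L α γ ∪ L γ β := by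
  induction β using WellFoundedLT.induction with
  | ind β IH =>
    rcases hγβ.eq_or_lt with rfl | hγβ
    · simp [hL.1]
    have hαβ : α < β := hαγ.trans_lt hγβ
    obtain ⟨-, hle, hlt_min⟩ := hC.minAbove_mem_Ico hγβ hβ
    have IH' := IH _ hlt_min hle (hlt_min.trans hβ)
    rcases (C β ∩ Iio γ).eq_empty_or_nonempty with hc | hc
    · have hcα : C β ∩ Iio α = ∅ := subset_empty_iff.mp (hc ▸ inter_subset_inter_right _
        (Iio_subset_Iio hαγ))
      rw [hL.2.1 α β hαβ hcα, hL.2.1 γ β hγβ hc,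
        minAbove_eq_of_inter_Iio_eq hαγ (hcα.trans hc.symm)]
      rw [hL.2.1 γ β hγβ hc] at hlt
      exact IH' hlt
    set μ := maxBelow C γ β
    have hμθ : μ < θ := hlt μ (by rw [hL.2.2 γ β hγβ hc]; exact ⟨Or.inr rfl, le_rfl⟩)
    have hinter : C β ∩ Iio α = C β ∩ Iio γ := by
      refine subset_antisymm (inter_subset_inter_right _ (Iio_subset_Iio hαγ))
        fun ξ hξ => ⟨hξ.1, ?_⟩
      have hbdd := (hC.finite_inter_Iio hγβ hβ).bddAbove
      exact (le_csSup hbdd hξ).trans_lt (hμθ.trans_le hθα)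
    have hmax : maxBelow C α β = μ := by rw [maxBelow, hinter]; rfl
    rw [hL.2.2 γ β hγβ hc] at hlt ⊢
    rw [hL.2.2 α β hαβ (hinter ▸ hc), hmax, minAbove_eq_of_inter_Iio_eq hαγ hinter,
      IH' fun ζ hζ => (le_or_gt μ ζ).elim (fun h => hlt ζ ⟨Or.inl hζ, h⟩) (·.trans hμθ)]
    ext ζ
    simp only [mem_ofPred_eq, mem_union, mem_singleton_iff]
    have hμζ : ζ ∈ L α γ → μ ≤ ζ := fun h => hμθ.le.trans (hθ ζ h)
    tauto

end LowerSpec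

/-- If `α ≤ γ ≤ β < ω₁`, `L(α,γ) ≠ ∅` and every element of `L(γ,β)` is strictly below
`min L(α,γ)`, then `L(α,β) = L(α,γ) ∪ L(γ,β)`. -/
theorem stmt3 (C : Ordinal → Set Ordinal) (hC : IsCSeq C)
    (L : Ordinal → Ordinal → Set Ordinal) (hL : LowerSpec C L)
    (α γ β : Ordinal) (hαγ : α ≤ γ) (hγβ : γ ≤ β) (hβ : β < omega1)
    (hne : L α γ ≠ ∅) (hlt : ∀ ζ ∈ L γ β, ζ < sInf (L α γ)) :
    L α β = L α γ ∪ L γ β := by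
  have hmin : sInf (L α γ) ∈ L α γ := csInf_mem (nonempty_iff_ne_empty.mpr hne)
  have hminα : sInf (L α γ) ≤ α := (hL.lt_of_mem hC hαγ (hγβ.trans_lt hβ) hmin).le
  exact hL.eq_union_of_lt hC hαγ hminα (fun ζ hζ => csInf_le (OrderBot.bddBelow _) hζ) hγβ hβ hlt
end
end

section
/- Fix a C-sequence. Let β < ω₁ be a limit ordinal. Then for every ξ < β there exists α₀ < β such that for every α with α₀ ≤ α < β, the lower trace L(α,β) is nonempty and min L(α,β) > ξ; that is, min L(α,β) tends to β as α tends to β. -/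
/-
Once `α` passes a point `η ∈ C β` above `ξ` (one exists since `C β` is cofinal in `β`), the set
`C β ∩ α` is nonempty and its maximum is at least `η > ξ`. The lower-trace recursion then puts
`max (C β ∩ α)` into `L(α,β)` and discards everything below it, so it is the minimum of `L(α,β)`.
-/

noncomputable section

open Set Ordinal

theorem le_maxBelow {C : Ordinal → Set Ordinal} {α β η : Ordinal} (hη : η ∈ C β)
    (hηα : η < α) : η ≤ maxBelow C α β :=
  le_csSup ⟨α, fun _ hx => hx.2.le⟩ ⟨hη, hηα⟩

theorem LowerSpec.isLeast_maxBelow {C : Ordinal → Set Ordinal}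
    {L : Ordinal → Ordinal → Set Ordinal} {α β : Ordinal} (hL : LowerSpec C L) (hαβ : α < β)
    (hne : (C β ∩ Iio α).Nonempty) :
    IsLeast (L α β) (maxBelow C α β) := by
  rw [hL.2.2 α β hαβ hne]
  exact ⟨⟨Or.inr rfl, le_rfl⟩, fun _ hζ => hζ.2⟩

/-- For a limit ordinal `β < ω₁`: for every `ξ < β` there is `α₀ < β` such that for all
`α` with `α₀ ≤ α < β`, the lower trace `L(α,β)` is nonempty and `min L(α,β) > ξ`;
i.e. `min L(α,β) → β` as `α → β`. -/
theorem stmt4 (C : Ordinal → Set Ordinal) (hC : IsCSeq C)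
    (L : Ordinal → Ordinal → Set Ordinal) (hL : LowerSpec C L)
    (β : Ordinal) (hβ : β < omega1) (hlim : Order.IsSuccLimit β) :
    ∀ ξ < β, ∃ α₀ < β, ∀ α, α₀ ≤ α → α < β →
      (L α β).Nonempty ∧ ξ < sInf (L α β) := by
  intro ξ hξ
  obtain ⟨hCβ_lt, hCβ_cofinal, -⟩ := hC.2.2 β hβ hlim
  obtain ⟨η, hηC, hξη⟩ := hCβ_cofinal (ξ + 1) (hlim.succ_lt hξ)
  refine ⟨η + 1, hlim.succ_lt (hCβ_lt η hηC), fun α hα₀ hαβ => ?_⟩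
  have hηα : η < α := (lt_add_one η).trans_le hα₀
  have hleast := hL.isLeast_maxBelow hαβ ⟨η, hηC, hηα⟩
  refine ⟨⟨_, hleast.1⟩, ?_⟩
  calc ξ < ξ + 1 := lt_add_one ξ
    _ ≤ η := hξη
    _ ≤ maxBelow C α β := le_maxBelow hηC hηα
    _ = sInf (L α β) := hleast.csInf_eq.symm
end
end

section
/- Fix a C-sequence and a rationally independent sequence ⟨z_α : α < ω₁⟩ in the unit circle. Then Moore's L-space 𝓛 is not a Q-set space: there exists a subset A ⊆ 𝓛 that is not a Gδ set in the subspace topology of 𝓛. -/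
noncomputable section

open Set Ordinal TopologicalSpace Topology

/-- `e` is the maximal weight function: `e β α = max {|C ξ ∩ α| : ξ ∈ U(α,β)}`
(here `e β` plays the role of `e_β : β → ω`). -/
def ESpec (C : Ordinal → Set Ordinal) (U : Ordinal → Ordinal → Set Ordinal)
    (e : Ordinal → Ordinal → ℕ) : Prop :=
  ∀ α β, α < β → e β α = sSup {n : ℕ | ∃ ξ ∈ U α β, n = (C ξ ∩ Iio α).ncard}

/-- `osc` is the oscillation function: for `α < β`, `osc α β` is the number of
`ζ ∈ L(α,β) \ {min L(α,β)}` such that `e_α(ζ⁻) ≤ e_β(ζ⁻)` and `e_α(ζ) > e_β(ζ)`,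
where `ζ⁻ = max {η ∈ L(α,β) : η < ζ}` is the immediate predecessor of `ζ` in the
increasing enumeration of the (finite) set `L(α,β)`; and `osc α α = 0`. -/
def OscSpec (L : Ordinal → Ordinal → Set Ordinal) (e : Ordinal → Ordinal → ℕ)
    (osc : Ordinal → Ordinal → ℕ) : Prop :=
  (∀ α, osc α α = 0) ∧
  ∀ α β, α < β →
    osc α β = Set.ncard {ζ | ζ ∈ L α β ∧ ζ ≠ sInf (L α β) ∧
      e α (sSup {η ∈ L α β | η < ζ}) ≤ e β (sSup {η ∈ L α β | η < ζ}) ∧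
      e β ζ < e α ζ}

/-- `z` is a rationally independent sequence in the unit circle (indexed by `ω₁`):
each `z α` has modulus `1`, and any product `∏ z α ^ k α = 1` over a finite set of
indices below `ω₁` forces all the integer exponents to vanish. -/
def RatIndep (z : Ordinal → ℂ) : Prop :=
  (∀ α < omega1, ‖z α‖ = 1) ∧
  ∀ (s : Finset Ordinal) (k : Ordinal → ℤ), (∀ α ∈ s, α < omega1) →
    ∏ α ∈ s, z α ^ k α = 1 → ∀ α ∈ s, k α = 0

/-- `w β : ω₁ → 𝒮`, `w β α = o(α,β) = z α ^ (osc(α,β)+1)` for `α < β` and `1` otherwise. -/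
def wFn (z : Ordinal → ℂ) (osc : Ordinal → Ordinal → ℕ) (β α : Ordinal) : ℂ :=
  if α < β then z α ^ (osc α β + 1) else 1

/-- Moore's L-space `𝓛 = {w_β : β < ω₁}`, a subset of the product `𝒮^{ω₁} ⊆ ℂ^{ω₁}`
(with the product topology). -/
def MooreL (z : Ordinal → ℂ) (osc : Ordinal → Ordinal → ℕ) :
    Set ({a : Ordinal // a < omega1} → ℂ) :=
  {g | ∃ β < omega1, ∀ i, g i = wFn z osc β i.1}

/-!
For `α < μ` the walk from `μ + 1` down to `α` steps to `μ` first, so `osc(α, μ + 1) = osc(α, μ)`: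
the points `w_{μ+1}` and `w_μ` agree below `μ`, both are `1` from `μ + 1` on, and they differ at
`μ` by rational independence. Suppose the set of `w_μ` with `μ` limit were `⋂ₙ Uₙ`. Then each
`w_{μ+1}` misses some `U_{n(μ)}`, which contains a basic box around `w_μ` built from a countable
basis of the circle. The part of that box below `μ` is a finite regressive datum with countably
many possible values, so a pressing-down argument produces limits `μ < μ'` with the same `n` and
the same part below. That part of the box of `μ'` then lies below `μ`, where `w_{μ+1}` agrees with
`w_μ`, so the box of `μ'` contains `w_{μ+1}`, although `w_{μ+1} ∉ U_{n(μ')}`.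
-/

open Order

local notation "Ω" => {a : Ordinal // a < omega1}

lemma omega1_eq : omega1 = ω₁ := Cardinal.ord_aleph 1

lemma succ_lt_omega1 {γ : Ordinal} (hγ : γ < omega1) : succ γ < omega1 := by
  rw [omega1_eq] at *
  exact (Cardinal.isSuccLimit_omega 1).succ_lt hγ

lemma countable_Iic_of_lt_omega1 {γ : Ordinal} (hγ : γ < omega1) : (Iic γ).Countable := by
  rw [← Iio_succ, ← Cardinal.le_aleph0_iff_set_countable, Cardinal.mk_Iio_ordinal,
    Cardinal.lift_le_aleph0, ← Cardinal.lt_aleph_one_iff, ← Cardinal.lt_omega_iff_card_lt,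
    ← omega1_eq]
  exact succ_lt_omega1 hγ

lemma exists_lt_omega1_subset_Iio {S : Set Ordinal} (hS : S.Countable) (hSω : S ⊆ Iio omega1) :
    ∃ b < omega1, S ⊆ Iio b := by
  have := hS.to_subtype
  refine ⟨⨆ x : S, succ x.1, ?_, fun x hx => ?_⟩
  · rw [omega1_eq] at *
    exact Ordinal.iSup_lt_omega_one fun x => (Cardinal.isSuccLimit_omega 1).succ_lt (hSω x.2)
  · exact (lt_succ x).trans_le (Ordinal.le_iSup (fun x : S => succ x.1) ⟨x, hx⟩)

lemma exists_isSuccLimit_forall_lt (f : Ordinal → Ordinal) (hf : ∀ γ < omega1, f γ < omega1) :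
    ∃ δ < omega1, IsSuccLimit δ ∧ ∀ γ < δ, f γ < δ := by
  let g : Ordinal → Ordinal := fun α => succ (max α (⨆ γ : Iic α, f γ))
  have hfg : ∀ {γ α}, γ ≤ α → f γ < g α := fun {γ α} h =>
    lt_succ_of_le (le_max_of_le_right (Ordinal.le_iSup (fun γ : Iic α => f γ) ⟨γ, h⟩))
  have hg : ∀ α < omega1, g α < omega1 := by
    intro α hα
    have := (countable_Iic_of_lt_omega1 hα).to_subtype
    refine succ_lt_omega1 (max_lt hα ?_)
    rw [omega1_eq] at *
    exact Ordinal.iSup_lt_omega_one fun γ => hf _ (lt_of_le_of_lt γ.2 hα)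
  have hlt : ∀ {γ}, γ < Ordinal.nfp g ω → ∃ α, γ < α ∧ g α ≤ Ordinal.nfp g ω := by
    intro γ hγ
    obtain ⟨n, hn⟩ := Ordinal.lt_nfp_iff.1 hγ
    refine ⟨_, hn, ?_⟩
    rw [← Function.iterate_succ_apply' g]
    exact Ordinal.iterate_le_nfp g ω (n + 1)
  refine ⟨Ordinal.nfp g ω, ?_, ?_, fun γ hγ => ?_⟩
  · rw [omega1_eq] at hg ⊢
    exact Ordinal.nfp_lt_ord (by simp) hg Ordinal.omega0_lt_omega_one
  · refine Ordinal.isSuccLimit_iff.2 ⟨(Ordinal.omega0_pos.trans_le (Ordinal.le_nfp g ω)).ne',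
      isSuccPrelimit_of_succ_lt fun γ hγ => ?_⟩
    obtain ⟨α, hγα, hα⟩ := hlt hγ
    exact ((succ_le_of_lt hγα).trans (le_max_left _ _)).trans_lt (lt_succ _) |>.trans_le hα
  · obtain ⟨α, hγα, hα⟩ := hlt hγ
    exact (hfg hγα.le).trans_le hα

def countableLimits : Set Ordinal := {μ | μ < omega1 ∧ IsSuccLimit μ}

-- A weak form of Fodor's pressing-down lemma.
lemma exists_not_countable_of_regressive {κ : Type*} [Countable κ] (a : Ordinal → κ)
    (g : Ordinal → Ordinal) (hg : ∀ μ ∈ countableLimits, g μ < μ) :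
    ∃ k, ∃ γ < omega1, ¬ {μ ∈ countableLimits | a μ = k ∧ g μ ≤ γ}.Countable := by
  by_contra! hcount
  choose! b hbω hb using fun k γ (hγ : γ < omega1) =>
    exists_lt_omega1_subset_Iio (hcount k γ hγ) fun μ hμ => hμ.1.1
  obtain ⟨δ, hδω, hδ, hclosed⟩ := exists_isSuccLimit_forall_lt (fun γ => ⨆ k, b k γ)
    fun γ hγ => omega1_eq ▸ Ordinal.iSup_lt_omega_one fun k => omega1_eq ▸ hbω k γ hγ
  have hgδ : g δ < δ := hg δ ⟨hδω, hδ⟩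
  have hδb : δ < b (a δ) (g δ) := hb _ _ (hgδ.trans hδω)
    (show δ ∈ {μ ∈ countableLimits | a μ = a δ ∧ g μ ≤ g δ} from ⟨⟨hδω, hδ⟩, rfl, le_rfl⟩)
  exact (hδb.trans_le (Ordinal.le_iSup (fun k => b k (g δ)) (a δ))).trans (hclosed _ hgδ) |>.false

lemma exists_lt_eq_of_not_countable {α β : Type*} [LinearOrder α] {S : Set α} {T : Set β}
    {f : α → β} (hS : ¬ S.Countable) (hf : MapsTo f S T) (hT : T.Countable) :
    ∃ x ∈ S, ∃ y ∈ S, x < y ∧ f x = f y := by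
  by_contra! h
  refine hS (hf.countable_of_injOn (fun x hx y hy hxy => ?_) hT)
  by_contra hne
  rcases lt_or_gt_of_ne hne with hlt | hlt
  · exact h x hx y hy hlt hxy
  · exact h y hy x hx hlt hxy.symm

lemma countable_setOf_finset_subset {α : Type*} {T : Set α} (hT : T.Countable) :
    {s : Finset α | ↑s ⊆ T}.Countable := by
  refine ((countable_ofPred_finite_subset hT).preimage Finset.coe_injective).mono ?_
  intro s hs
  exact ⟨s.finite_toSet, hs⟩

lemma exists_lt_eq_of_regressive {κ κ' : Type*} [Countable κ] [Countable κ']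
    (a : Ordinal → κ) (c : Ordinal → Finset (Ordinal × κ'))
    (hc : ∀ μ ∈ countableLimits, ∀ p ∈ c μ, p.1 < μ) :
    ∃ μ ∈ countableLimits, ∃ μ' ∈ countableLimits, μ < μ' ∧ a μ = a μ' ∧ c μ = c μ' := by
  obtain ⟨k, γ, hγ, hS⟩ := exists_not_countable_of_regressive a (fun μ => (c μ).sup Prod.fst)
    fun μ hμ => (Finset.sup_lt_iff hμ.2.bot_lt).2 (hc μ hμ)
  obtain ⟨μ, hμ, μ', hμ', hlt, hcμ⟩ := exists_lt_eq_of_not_countable hS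
    (f := c) (T := {s | ↑s ⊆ Iic γ ×ˢ Set.univ})
    (fun μ hμ p hp => ⟨(Finset.le_sup hp).trans hμ.2.2, trivial⟩)
    (countable_setOf_finset_subset ((countable_Iic_of_lt_omega1 hγ).prod countable_univ))
  exact ⟨μ, hμ.1, μ', hμ'.1, hlt, hμ.2.1.trans hμ'.2.1.symm, hcμ⟩

lemma exists_finset_basis_box {ι Y : Type*} [TopologicalSpace Y] {B : Set (Set Y)}
    (hB : IsTopologicalBasis B) {V : Set (ι → Y)} (hV : IsOpen V) {x : ι → Y} (hx : x ∈ V) :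
    ∃ s : Finset (ι × B), (∀ p ∈ s, x p.1 ∈ (p.2 : Set Y)) ∧
      ∀ y : ι → Y, (∀ p ∈ s, y p.1 ∈ (p.2 : Set Y)) → y ∈ V := by
  classical
  obtain ⟨I, u, hu, hIu⟩ := isOpen_pi_iff.1 hV x hx
  choose b hbB hxb hbu using fun i (hi : i ∈ I) =>
    hB.exists_subset_of_mem_open (hu i hi).2 (hu i hi).1
  refine ⟨I.attach.image fun i => (i.1, ⟨b i.1 i.2, hbB _ _⟩), ?_, fun y hy => hIu fun i hi => ?_⟩
  · simp only [Finset.mem_image, Finset.mem_attach, true_and, forall_exists_index]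
    rintro _ ⟨i, hi⟩ rfl
    exact hxb i hi
  · exact hbu i hi <| hy (i, ⟨b i hi, hbB i hi⟩) <|
      Finset.mem_image.2 ⟨⟨i, hi⟩, Finset.mem_attach _ _, rfl⟩

def boxBelow {β : Type*} (μ : Ordinal) (s : Finset (Ω × β)) : Finset (Ordinal × β) :=
  (s.filter fun p => p.1.1 < μ).map ((Function.Embedding.subtype _).prodMap (.refl β))

lemma fst_lt_of_mem_boxBelow {β : Type*} {μ : Ordinal} {s : Finset (Ω × β)} {q : Ordinal × β}
    (hq : q ∈ boxBelow μ s) : q.1 < μ := by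
  obtain ⟨p, hp, rfl⟩ := Finset.mem_map.1 hq
  exact (Finset.mem_filter.1 hp).2

lemma mem_boxBelow_iff {β : Type*} {μ : Ordinal} {s : Finset (Ω × β)} {p : Ω × β} :
    (p.1.1, p.2) ∈ boxBelow μ s ↔ p ∈ s ∧ p.1.1 < μ := by
  rw [boxBelow, ← Finset.mem_filter (p := fun p : Ω × β => p.1.1 < μ)]
  exact Finset.mem_map' _

section Boxes

variable {Y : Type*} {W : Ordinal → Ω → Y}

lemma forall_mem_box_add_one {B : Set (Set Y)}
    (htail : ∀ β β' (i : Ω), β ≤ i.1 → β' ≤ i.1 → W β i = W β' i)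
    {μ μ' : Ordinal} (hsucc : ∀ i : Ω, i.1 < μ → W (μ + 1) i = W μ i) (hlt : μ < μ')
    {s s' : Finset (Ω × B)} (hs : ∀ p ∈ s, W μ p.1 ∈ (p.2 : Set Y))
    (hs' : ∀ p ∈ s', W μ' p.1 ∈ (p.2 : Set Y)) (hss' : boxBelow μ s = boxBelow μ' s') :
    ∀ p ∈ s', W (μ + 1) p.1 ∈ (p.2 : Set Y) := by
  intro p hp
  rcases lt_or_ge p.1.1 μ' with h | h
  · have hpμ : p ∈ s ∧ p.1.1 < μ := by
      rw [← mem_boxBelow_iff, hss', mem_boxBelow_iff]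
      exact ⟨hp, h⟩
    rw [hsucc _ hpμ.2]
    exact hs p hpμ.1
  · rw [htail (μ + 1) μ' p.1 ((add_one_le_of_lt hlt).trans h) h]
    exact hs' p hp

theorem not_isGδ_preimage_image_countableLimits [TopologicalSpace Y] [SecondCountableTopology Y]
    {X : Set (Ω → Y)} (hWX : ∀ β < omega1, W β ∈ X) (hinj : InjOn W (Iio omega1))
    (htail : ∀ β β' (i : Ω), β ≤ i.1 → β' ≤ i.1 → W β i = W β' i)
    (hsucc : ∀ μ ∈ countableLimits, ∀ i : Ω, i.1 < μ → W (μ + 1) i = W μ i) :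
    ¬ IsGδ ((Subtype.val : X → _) ⁻¹' (W '' countableLimits)) := by
  intro hA
  obtain ⟨U, hUo, hA⟩ := hA.eq_iInter_nat
  choose V hVo hV using fun n => isOpen_induced_iff.1 (hUo n)
  have hmem : ∀ β < omega1, (∀ n, W β ∈ V n) ↔ β ∈ countableLimits := by
    intro β hβ
    have h := congrArg ((⟨W β, hWX β hβ⟩ : X) ∈ ·) hA
    simp only [mem_preimage, mem_iInter, ← hV] at h
    rw [← h, hinj.mem_image_iff (fun μ hμ => hμ.1) hβ]
  have hbox : ∀ μ ∈ countableLimits, ∃ n, ∃ s : Finset (Ω × countableBasis Y),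
      W (μ + 1) ∉ V n ∧ (∀ p ∈ s, W μ p.1 ∈ (p.2 : Set Y)) ∧
      ∀ y, (∀ p ∈ s, y p.1 ∈ (p.2 : Set Y)) → y ∈ V n := by
    intro μ hμ
    have hsucc_lt : μ + 1 < omega1 := succ_eq_add_one μ ▸ succ_lt_omega1 hμ.1
    have hsucc_nlim : μ + 1 ∉ countableLimits := fun h =>
      not_isSuccLimit_succ μ (succ_eq_add_one μ ▸ h.2)
    obtain ⟨n, hn⟩ := not_forall.1 (mt (hmem _ hsucc_lt).1 hsucc_nlim)
    obtain ⟨s, hs⟩ := exists_finset_basis_box (isBasis_countableBasis Y) (hVo n)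
      ((hmem μ hμ.1).2 hμ n)
    exact ⟨n, s, hn, hs⟩
  choose! n s hn hsμ hsV using hbox
  have := (countable_countableBasis Y).to_subtype
  obtain ⟨μ, hμ, μ', hμ', hlt, hnμ, hsμμ'⟩ := exists_lt_eq_of_regressive n
    (fun μ => boxBelow μ (s μ)) fun μ _ _ => fst_lt_of_mem_boxBelow
  exact hn μ hμ <| hnμ ▸ hsV μ' hμ' _ <|
    forall_mem_box_add_one htail (hsucc μ hμ) hlt (hsμ μ hμ) (hsμ μ' hμ') hsμμ'

end Boxes

lemma csSup_insert_bot {α : Type*} [ConditionallyCompleteLinearOrderBot α] (s : Set α) :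
    sSup (insert ⊥ s) = sSup s := by
  by_cases hs : BddAbove s
  · rw [csSup_insert' hs, bot_sup_eq]
  · rw [csSup_of_not_bddAbove hs,
      csSup_of_not_bddAbove (mt (BddAbove.mono (subset_insert _ _)) hs)]

section Walks

variable {C : Ordinal → Set Ordinal} {U L : Ordinal → Ordinal → Set Ordinal}
  {e : Ordinal → Ordinal → ℕ} {osc : Ordinal → Ordinal → ℕ}

lemma IsCSeq.inter_Iio_add_one (hC : IsCSeq C) {α μ : Ordinal} (h : α ≤ μ) :
    C (μ + 1) ∩ Iio α = ∅ := by
  rw [hC.2.1 μ, singleton_inter_eq_empty, mem_Iio, not_lt]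
  exact h

lemma IsCSeq.minAbove_add_one (hC : IsCSeq C) {α μ : Ordinal} (h : α ≤ μ) :
    minAbove C α (μ + 1) = μ := by
  rw [minAbove, hC.2.1 μ, sep_eq_self_iff_mem_true.2 fun ξ hξ => (mem_singleton_iff.1 hξ) ▸ h,
    csInf_singleton]

lemma IsCSeq.minAbove_mem_Ico_s6 (hC : IsCSeq C) {α β : Ordinal} (hβ : β < omega1) (h : α < β) :
    minAbove C α β ∈ Ico α β := by
  rcases Ordinal.zero_or_succ_or_isSuccLimit β with rfl | ⟨δ, rfl⟩ | hlim
  · simp at h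
  · rw [lt_succ_iff] at h
    rw [succ_eq_add_one, hC.minAbove_add_one h]
    exact ⟨h, lt_add_one δ⟩
  · obtain ⟨η, hη, hαη⟩ := (hC.2.2 β hβ hlim).2.1 α h
    have hmem : minAbove C α β ∈ {ξ ∈ C β | α ≤ ξ} := csInf_mem ⟨η, hη, hαη⟩
    exact ⟨hmem.2, (hC.2.2 β hβ hlim).1 _ hmem.1⟩

lemma maxBelow_le (C : Ordinal → Set Ordinal) (α β : Ordinal) : maxBelow C α β ≤ α :=
  csSup_le' fun _ h => h.2.le

lemma LowerSpec.subset_Iic (hC : IsCSeq C) (hL : LowerSpec C L) :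
    ∀ β < omega1, ∀ α ≤ β, L α β ⊆ Iic α := by
  intro β
  induction β using WellFoundedLT.induction with | _ β ih =>
  intro hβ α hαβ
  rcases hαβ.eq_or_lt with rfl | hlt
  · simp [hL.1]
  obtain ⟨hαm, hmβ⟩ := hC.minAbove_mem_Ico_s6 hβ hlt
  have ih' := ih _ hmβ (hmβ.trans hβ) α hαm
  rcases (C β ∩ Iio α).eq_empty_or_nonempty with h | h
  · rwa [hL.2.1 α β hlt h]
  · rw [hL.2.2 α β hlt h]
    rintro ζ ⟨hζ | rfl, -⟩
    exacts [ih' hζ, maxBelow_le C α β]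

lemma LowerSpec.add_one (hC : IsCSeq C) (hL : LowerSpec C L) {α μ : Ordinal} (h : α ≤ μ) :
    L α (μ + 1) = L α μ := by
  rw [hL.2.1 α (μ + 1) (h.trans_lt (lt_add_one μ)) (hC.inter_Iio_add_one h),
    hC.minAbove_add_one h]

lemma UpperSpec.add_one (hC : IsCSeq C) (hU : UpperSpec C U) {α μ : Ordinal} (h : α ≤ μ) :
    U α (μ + 1) = U α μ ∪ {μ + 1} := by
  rw [hU.2 α (μ + 1) (h.trans_lt (lt_add_one μ)), hC.minAbove_add_one h]

lemma ESpec.add_one (hC : IsCSeq C) (hU : UpperSpec C U) (he : ESpec C U e) {ζ μ : Ordinal}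
    (h : ζ < μ) : e (μ + 1) ζ = e μ ζ := by
  rw [he ζ (μ + 1) (h.trans (lt_add_one μ)), he ζ μ h, hU.add_one hC h.le]
  conv_rhs => rw [← csSup_insert_bot]
  congr 1
  ext n
  simp [hC.inter_Iio_add_one h.le, or_comm]

lemma OscSpec.add_one (hC : IsCSeq C) (hU : UpperSpec C U) (hL : LowerSpec C L)
    (he : ESpec C U e) (hosc : OscSpec L e osc) {α μ : Ordinal} (hαμ : α < μ) (hμ : μ < omega1) :
    osc α (μ + 1) = osc α μ := by
  have hLα := hL.subset_Iic hC μ hμ α hαμ.le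
  rw [hosc.2 α (μ + 1) (hαμ.trans (lt_add_one μ)), hosc.2 α μ hαμ, hL.add_one hC hαμ.le]
  congr 1
  ext ζ
  refine and_congr_right fun hζ => ?_
  have hpred : sSup {η ∈ L α μ | η < ζ} < μ := (csSup_le' fun η hη => hLα hη.1).trans_lt hαμ
  rw [he.add_one hC hU hpred, he.add_one hC hU ((hLα hζ).trans_lt hαμ)]

end Walks

lemma RatIndep.pow_ne_one {z : Ordinal → ℂ} (hz : RatIndep z) {α : Ordinal} (hα : α < omega1)
    (n : ℕ) : z α ^ (n + 1) ≠ 1 := by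
  intro h
  have := hz.2 {α} (fun _ => (n + 1 : ℕ)) (by simpa using hα)
    (by rw [Finset.prod_singleton, zpow_natCast]; exact h) α
    (Finset.mem_singleton_self α)
  omega

lemma wFn_eq_one (z : Ordinal → ℂ) (osc : Ordinal → Ordinal → ℕ) {β α : Ordinal} (h : β ≤ α) :
    wFn z osc β α = 1 :=
  if_neg (not_lt.2 h)

lemma wFn_injOn {z : Ordinal → ℂ} (hz : RatIndep z) (osc : Ordinal → Ordinal → ℕ) :
    InjOn (fun β (i : Ω) => wFn z osc β i.1) (Iio omega1) := by
  suffices h : ∀ β ∈ Iio omega1, ∀ β' ∈ Iio omega1, β < β' →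
      (fun i : Ω => wFn z osc β i.1) ≠ fun i => wFn z osc β' i.1 by
    intro β hβ β' hβ' heq
    by_contra hne
    rcases lt_or_gt_of_ne hne with hlt | hlt
    exacts [h β hβ β' hβ' hlt heq, h β' hβ' β hβ hlt heq.symm]
  intro β hβ β' hβ' hlt heq
  have : wFn z osc β β = wFn z osc β' β := congrFun heq ⟨β, hβ⟩
  rw [wFn_eq_one z osc le_rfl, wFn, if_pos hlt] at this
  exact hz.pow_ne_one hβ _ this.symm

lemma wFn_add_one (hC : IsCSeq C) (hU : UpperSpec C U) (hL : LowerSpec C L) (he : ESpec C U e)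
    (hosc : OscSpec L e osc) (z : Ordinal → ℂ) {α μ : Ordinal} (hαμ : α < μ) (hμ : μ < omega1) :
    wFn z osc (μ + 1) α = wFn z osc μ α := by
  rw [wFn, wFn, if_pos (hαμ.trans (lt_add_one μ)), if_pos hαμ, hosc.add_one hC hU hL he hαμ hμ]

/-- Moore's L-space is not a Q-set space: some subset of `𝓛` is not a `Gδ` set in the
subspace topology of `𝓛`. -/
theorem stmt6 (C : Ordinal → Set Ordinal) (hC : IsCSeq C)
    (U : Ordinal → Ordinal → Set Ordinal) (hU : UpperSpec C U)
    (L : Ordinal → Ordinal → Set Ordinal) (hL : LowerSpec C L)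
    (e : Ordinal → Ordinal → ℕ) (he : ESpec C U e)
    (osc : Ordinal → Ordinal → ℕ) (hosc : OscSpec L e osc)
    (z : Ordinal → ℂ) (hz : RatIndep z) :
    ∃ A : Set (MooreL z osc), ¬ IsGδ A := by
  refine ⟨_, not_isGδ_preimage_image_countableLimits (W := fun β i => wFn z osc β i.1)
    (fun β hβ => ⟨β, hβ, fun _ => rfl⟩) (wFn_injOn hz osc) ?_ ?_⟩
  · exact fun β β' i hβ hβ' => (wFn_eq_one z osc hβ).trans (wFn_eq_one z osc hβ').symm
  · exact fun μ hμ i hi => wFn_add_one hC hU hL he hosc z hi hμ.1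
end
end

section
/- Fix a C-sequence ⟨C_α : α < ω₁⟩ and a coherent family of injections ⟨f_α : α < ω₁ a limit ordinal⟩. Then for every limit ordinal α < ω₁, the set {x ∈ ([ω]^{<ω})^ω : sup(⋃ₙ D_α^x(n)) = α} is comeager in the product space ([ω]^{<ω})^ω. -/
noncomputable section

open Set Ordinal

/-- `ζ` is a successor ordinal. -/
def IsSuccOrd (ζ : Ordinal) : Prop := ∃ η, ζ = η + 1

/-- `Cnth α` enumerates `C α` in increasing order, for every limit `α < ω₁`
(recall that such `C α` has order type `ω`). -/
def EnumSpec (C : Ordinal → Set Ordinal) (Cnth : Ordinal → ℕ → Ordinal) : Prop :=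
  ∀ α, α < omega1 → Order.IsSuccLimit α → StrictMono (Cnth α) ∧ Set.range (Cnth α) = C α

/-- `f` is a coherent family of injections: for each limit `α < ω₁`, `f α` is injective
on the set `suc(α)` of successor ordinals below `α`, and for limit `α < β < ω₁` the
functions `f α` and `f β` agree on all but finitely many members of `suc(α)`. -/
def CoherentInj (f : Ordinal → Ordinal → ℕ) : Prop :=
  (∀ α, α < omega1 → Order.IsSuccLimit α →
    ∀ ζ η, ζ < α → IsSuccOrd ζ → η < α → IsSuccOrd η → f α ζ = f α η → ζ = η) ∧
  ∀ α β, α < β → β < omega1 → Order.IsSuccLimit α → Order.IsSuccLimit β →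
    {ζ | ζ < α ∧ IsSuccOrd ζ ∧ f α ζ ≠ f β ζ}.Finite

/-- The Cohen forcing `ℙ = Fn(ω, [ω]^{<ω})`: finite partial functions from `ω` to the
finite subsets of `ω`. -/
def PFn : Type := {p : ℕ → Option (Finset ℕ) // {n | p n ≠ none}.Finite}

/-- `p` extends `q` (i.e. `p ≤ q` in the Cohen forcing). -/
def PExt (p q : PFn) : Prop := ∀ n s, q.1 n = some s → p.1 n = some s

/-- `[ω]^{<ω}` carries the discrete topology; the space `([ω]^{<ω})^ω` then carries the
product topology. -/
instance : TopologicalSpace (Finset ℕ) := ⊥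

instance : DiscreteTopology (Finset ℕ) := ⟨rfl⟩

/-- `D_α^x(n) = {ζ ∈ suc(α) : C_α(n) ≤ ζ < C_α(n+1) and f_α(ζ) ∈ x(n)}`. -/
def Dset (Cnth : Ordinal → ℕ → Ordinal) (f : Ordinal → Ordinal → ℕ)
    (α : Ordinal) (x : ℕ → Finset ℕ) (n : ℕ) : Set Ordinal :=
  {ζ | ζ < α ∧ IsSuccOrd ζ ∧ Cnth α n ≤ ζ ∧ ζ < Cnth α (n + 1) ∧ f α ζ ∈ x n}

/-! `D_α^x(n)` depends only on the coordinate `x(n)`, and `D_α^x(n) ≠ ∅` is an open condition on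
it, satisfiable whenever `[C_α(n), C_α(n+1))` contains a successor ordinal, which happens for
infinitely many `n`. Hence the `x` with infinitely many nonempty `D_α^x(n)` form a dense `G_δ`, and
for those `x` the union of the `D_α^x(n)` is cofinal in `α` because `C_α` is. -/

open Filter Topology

theorem tendsto_update_atTop_nhds {X : Type*} [TopologicalSpace X] (x y : ℕ → X) :
    Tendsto (fun n => Function.update x n (y n)) atTop (𝓝 x) :=
  tendsto_pi_nhds.2 fun i => tendsto_const_nhds.congr' <|
    (eventually_ne_atTop i).mono fun _ hn => (Function.update_of_ne hn.symm _ _).symm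

theorem dense_biUnion_ge_preimage_eval {X : Type*} [TopologicalSpace X] {S : ℕ → Set X}
    (hS : ∃ᶠ n in atTop, (S n).Nonempty) (k : ℕ) :
    Dense (⋃ n ≥ k, (fun x : ℕ → X => x n) ⁻¹' S n) := by
  intro x
  have : Nonempty X := ⟨x 0⟩
  choose! y hy using fun n (h : (S n).Nonempty) => h
  have := frequently_iff_neBot.1 (hS.and_eventually (eventually_ge_atTop k))
  refine mem_closure_of_tendsto (b := atTop ⊓ 𝓟 {n | (S n).Nonempty ∧ k ≤ n})
    ((tendsto_update_atTop_nhds x y).mono_left inf_le_left) ?_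
  filter_upwards [mem_inf_of_right (mem_principal_self _)] with n ⟨hn, hkn⟩
  exact mem_biUnion hkn (by simpa using hy n hn)

theorem residual_frequently_mem {X : Type*} [TopologicalSpace X] {S : ℕ → Set X}
    (hSo : ∀ n, IsOpen (S n)) (hS : ∃ᶠ n in atTop, (S n).Nonempty) :
    {x : ℕ → X | ∃ᶠ n in atTop, x n ∈ S n} ∈ residual (ℕ → X) := by
  have hiInter : {x : ℕ → X | ∃ᶠ n in atTop, x n ∈ S n} =
      ⋂ k, ⋃ n ≥ k, (fun x : ℕ → X => x n) ⁻¹' S n := by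
    ext x
    simp [frequently_atTop]
  rw [hiInter]
  exact countable_iInter_mem.2 fun k => residual_of_dense_open
    (isOpen_biUnion fun n _ => (hSo n).preimage (continuous_apply n))
    (dense_biUnion_ge_preimage_eval hS k)

/-- Either `c n + 1` lies strictly below `c (n + 1)`, or it equals `c (n + 1)`, which then is a
successor ordinal in the next interval. -/
theorem frequently_exists_isSuccOrd_mem_Ico {c : ℕ → Ordinal} (hc : StrictMono c) :
    ∃ᶠ n in atTop, ∃ ζ, IsSuccOrd ζ ∧ ζ ∈ Ico (c n) (c (n + 1)) := by
  refine frequently_atTop.2 fun n => ?_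
  rcases (Order.add_one_le_of_lt (hc n.lt_succ_self)).lt_or_eq with h | h
  · exact ⟨n, le_rfl, c n + 1, ⟨c n, rfl⟩, (lt_add_one _).le, h⟩
  · exact ⟨n + 1, n.le_succ, c (n + 1), ⟨c n, h.symm⟩, le_rfl, hc (n + 1).lt_succ_self⟩

section CSeq

variable {C : Ordinal → Set Ordinal} {Cnth : Ordinal → ℕ → Ordinal} {α : Ordinal}

theorem Cnth_lt (hC : IsCSeq C) (hCnth : EnumSpec C Cnth) (hα : α < omega1)
    (hlim : Order.IsSuccLimit α) (n : ℕ) : Cnth α n < α :=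
  (hC.2.2 α hα hlim).1 _ ((hCnth α hα hlim).2 ▸ mem_range_self n)

theorem exists_lt_Cnth (hC : IsCSeq C) (hCnth : EnumSpec C Cnth) (hα : α < omega1)
    (hlim : Order.IsSuccLimit α) {ξ : Ordinal} (hξ : ξ < α) : ∃ n, ξ < Cnth α n := by
  obtain ⟨η, hηC, hξη⟩ := (hC.2.2 α hα hlim).2.1 (ξ + 1) (hlim.add_one_lt hξ)
  obtain ⟨n, rfl⟩ := (hCnth α hα hlim).2 ▸ hηC
  exact ⟨n, Order.add_one_le_iff.1 hξη⟩

end CSeq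

theorem sSup_iUnion_Dset_eq {Cnth : Ordinal → ℕ → Ordinal} {f : Ordinal → Ordinal → ℕ}
    {α : Ordinal} {x : ℕ → Finset ℕ} (hmono : Monotone (Cnth α))
    (hcof : ∀ ξ < α, ∃ n, ξ < Cnth α n) (hx : ∃ᶠ n in atTop, (Dset Cnth f α x n).Nonempty) :
    sSup (⋃ n, Dset Cnth f α x n) = α := by
  obtain ⟨n, ζ, hζ⟩ := hx.exists
  refine csSup_eq_of_forall_le_of_forall_lt_exists_gt ⟨ζ, mem_iUnion.2 ⟨n, hζ⟩⟩
    (fun ζ hζ => ?_) fun ξ hξ => ?_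
  · obtain ⟨n, hζ⟩ := mem_iUnion.1 hζ
    exact hζ.1.le
  · obtain ⟨m, hm⟩ := hcof ξ hξ
    obtain ⟨n, hmn, ζ, hζ⟩ := frequently_atTop.1 hx m
    exact ⟨ζ, mem_iUnion.2 ⟨n, hζ⟩, hm.trans_le ((hmono hmn).trans hζ.2.2.1)⟩

theorem stmt13_general (C : Ordinal → Set Ordinal) (hC : IsCSeq C)
    (Cnth : Ordinal → ℕ → Ordinal) (hCnth : EnumSpec C Cnth)
    (f : Ordinal → Ordinal → ℕ) :
    ∀ α, α < omega1 → Order.IsSuccLimit α →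
      {x : ℕ → Finset ℕ | sSup (⋃ n, Dset Cnth f α x n) = α} ∈
        residual (ℕ → Finset ℕ) := by
  intro α hα hlim
  have hmono := (hCnth α hα hlim).1
  -- `x n` lies in `S n` exactly when `D_α^x(n)` is nonempty.
  let S : ℕ → Set (Finset ℕ) := fun n => {s | (Dset Cnth f α (fun _ => s) n).Nonempty}
  have hS : ∃ᶠ n in atTop, (S n).Nonempty :=
    (frequently_exists_isSuccOrd_mem_Ico hmono).mono fun n ⟨ζ, hζ, hlo, hhi⟩ =>
      ⟨{f α ζ}, ζ, hhi.trans (Cnth_lt hC hCnth hα hlim _), hζ, hlo, hhi,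
        Finset.mem_singleton_self _⟩
  refine mem_of_superset (residual_frequently_mem (fun _ => isOpen_discrete _) hS) fun x hx => ?_
  exact sSup_iUnion_Dset_eq hmono.monotone (fun _ => exists_lt_Cnth hC hCnth hα hlim) hx

/-- For every limit `α < ω₁`, the set of `x ∈ ([ω]^{<ω})^ω` with
`sup (⋃ n, D_α^x(n)) = α` is comeager in the product space `([ω]^{<ω})^ω`. -/
theorem stmt13 (C : Ordinal → Set Ordinal) (hC : IsCSeq C)
    (Cnth : Ordinal → ℕ → Ordinal) (hCnth : EnumSpec C Cnth)
    (f : Ordinal → Ordinal → ℕ) (hf : CoherentInj f) :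
    ∀ α, α < omega1 → Order.IsSuccLimit α →
      {x : ℕ → Finset ℕ | sSup (⋃ n, Dset Cnth f α x n) = α} ∈
        residual (ℕ → Finset ℕ) :=
  stmt13_general C hC Cnth hCnth f
end
end
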